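/- Let D be a disk among a finite family 𝒟 of closed disks in the upper half-plane, each tangent to the x-axis (grounded), with D of minimum radius among those considered. Let D_i and D_j be two grounded disks that both intersect D, whose centers both have x-coordinate at most the x-coordinate of the center of D. Then D_i and D_j intersect each other. (Hence the disks intersecting a smallest disk D split into two cliques by the side of D's center, so their intersection graph is cobipartite.) -/

import Mathlib

/-!
Grounded disks of radii `r, s` over `a, b` meet iff `(a - b)² ≤ 4rs`. If `xᵢ ≤ xⱼ ≤ x_D`, then
`|xᵢ - xⱼ| ≤ |xᵢ - x_D| ≤ 2√(rᵢ r_D) ≤ 2√(rᵢ rⱼ)`, using `r_D ≤ rⱼ`; the case `xⱼ ≤ xᵢ` is symmetric.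
-/

/-- Center of the grounded disk of radius `r` over `x`. -/
noncomputable def gctr (x r : ℝ) : EuclideanSpace ℝ (Fin 2) := !₂[x, r]

lemma dist_gctr (a r b s : ℝ) :
    dist (gctr a r) (gctr b s) = √((a - b) ^ 2 + (r - s) ^ 2) := by
  simp [EuclideanSpace.dist_eq, gctr, Fin.sum_univ_two, Real.dist_eq, sq_abs]

lemma dist_gctr_le_add_iff {a r b s : ℝ} :
    dist (gctr a r) (gctr b s) ≤ r + s ↔ 0 ≤ r + s ∧ (a - b) ^ 2 ≤ 4 * r * s := by
  rw [dist_gctr, Real.sqrt_le_iff]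
  constructor <;> rintro ⟨hrs, h⟩ <;> exact ⟨hrs, by nlinarith⟩

lemma dist_gctr_le_add_of_between {xi ri xj rj xD rD : ℝ} (hrj : rD ≤ rj)
    (hij : xi ≤ xj) (hjD : xj ≤ xD) (hiD : dist (gctr xi ri) (gctr xD rD) ≤ ri + rD) :
    dist (gctr xi ri) (gctr xj rj) ≤ ri + rj := by
  obtain ⟨hsum, hsq⟩ := dist_gctr_le_add_iff.1 hiD
  -- `ri * rD ≥ 0` (from `hsq`) together with `ri + rD ≥ 0` forces `ri ≥ 0`.
  have hri : 0 ≤ ri := by nlinarith [sq_nonneg (xi - xD)]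
  refine dist_gctr_le_add_iff.2 ⟨by linarith, ?_⟩
  calc (xi - xj) ^ 2 ≤ (xi - xD) ^ 2 := by nlinarith
    _ ≤ 4 * ri * rD := hsq
    _ ≤ 4 * ri * rj := by gcongr

theorem stmt_12_general (xD rD xi ri xj rj : ℝ)
    (hri : rD ≤ ri) (hrj : rD ≤ rj)
    (hiD : dist (gctr xi ri) (gctr xD rD) ≤ ri + rD)
    (hjD : dist (gctr xj rj) (gctr xD rD) ≤ rj + rD)
    (hxi : xi ≤ xD) (hxj : xj ≤ xD) :
    dist (gctr xi ri) (gctr xj rj) ≤ ri + rj := by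
  rcases le_total xi xj with hij | hji
  · exact dist_gctr_le_add_of_between hrj hij hxj hiD
  · rw [dist_comm, add_comm]
    exact dist_gctr_le_add_of_between hri hji hxi hjD

/-- Two grounded disks intersecting a common smallest grounded disk `D`, with
centers on the same side of `D`'s center, intersect each other. -/
theorem stmt_12 (xD rD xi ri xj rj : ℝ)
    (hrD : 0 < rD) (hri : rD ≤ ri) (hrj : rD ≤ rj)
    (hiD : dist (gctr xi ri) (gctr xD rD) ≤ ri + rD)
    (hjD : dist (gctr xj rj) (gctr xD rD) ≤ rj + rD)
    (hxi : xi ≤ xD) (hxj : xj ≤ xD) :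
    dist (gctr xi ri) (gctr xj rj) ≤ ri + rj :=
  stmt_12_general xD rD xi ri xj rj hri hrj hiD hjD hxi hxj
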